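/- Let q be a prime with q ≡ 3 (mod 4) and q ≥ 7. Then the alternating group A_q on q letters contains a subgroup H of order q(q−1)/2 whose induced action on the set of 2-element subsets of {1, …, q} is transitive (and hence regular, since this set has exactly q(q−1)/2 elements). In particular, A_q acting on 2-element subsets has a proper transitive subgroup, so the socle A_q in this uniprimitive action of degree q(q−1)/2 is not minimal transitive. -/

import Mathlib

/-!
Identify the `q` letters with `𝔽_q` and take the maps `x ↦ a * x + b` with `a` a nonzero square:
they form a group of order `q(q-1)/2`. Each of them is a product of two squares of permutations
(a translation is the square of its half, and `x ↦ c²x` is the square of `x ↦ cx`), hence even.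
Given pairs `{x, y}` and `{u, v}`, swapping `u` and `v` changes the sign of the slope
`(v - u) / (y - x)`; since `-1` is not a square when `q ≡ 3 mod 4`, one of the two slopes is a
square, and the affine map with that slope carries one pair onto the other.
-/

open Equiv Equiv.Perm

lemma isSquare_or_isSquare_neg_of_not_isSquare_neg_one {F : Type*} [Field F] [Fintype F]
    (h : ¬IsSquare (-1 : F)) (r : F) : IsSquare r ∨ IsSquare (-r) := by
  classical
  by_contra! ⟨hr, hnr⟩
  rw [← quadraticChar_neg_one_iff_not_isSquare] at h hr hnr
  rw [neg_eq_neg_one_mul, map_mul, h, hr] at hnr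
  norm_num at hnr

section AffinePerm

variable {F : Type*} [Field F]

def affinePerm (a : Fˣ) (b : F) : Perm F :=
  (Units.mulLeft a).trans (Equiv.addRight b)

@[simp]
lemma affinePerm_apply (a : Fˣ) (b x : F) : affinePerm a b x = a * x + b := rfl

lemma affinePerm_mul (a c : Fˣ) (b d : F) :
    affinePerm a b * affinePerm c d = affinePerm (a * c) (a * d + b) := by
  ext x
  simp only [Perm.mul_apply, affinePerm_apply, Units.val_mul]
  ring

lemma affinePerm_one_zero : affinePerm (1 : Fˣ) (0 : F) = 1 := by
  ext x
  simp

lemma affinePerm_inv (a : Fˣ) (b : F) : (affinePerm a b)⁻¹ = affinePerm a⁻¹ (-(a⁻¹ * b)) := by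
  refine inv_eq_of_mul_eq_one_left ?_
  rw [affinePerm_mul, inv_mul_cancel, add_neg_cancel, affinePerm_one_zero]

lemma affinePerm_injective : Function.Injective fun p : Fˣ × F => affinePerm p.1 p.2 := by
  rintro ⟨a, b⟩ ⟨c, d⟩ h
  have h0 := congr($h 0)
  have h1 := congr($h 1)
  simp only [affinePerm_apply, mul_zero, zero_add, mul_one] at h0 h1
  rw [h0, add_left_inj] at h1
  rw [Units.ext h1, h0]

lemma affinePerm_eq_mul_self_mul_mul_self (h2 : (2 : F) ≠ 0) (c : Fˣ) (b : F) :
    affinePerm (c ^ 2) b =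
      affinePerm 1 (b / 2) * affinePerm 1 (b / 2) * (affinePerm c 0 * affinePerm c 0) := by
  ext x
  simp only [Perm.mul_apply, affinePerm_apply, Units.val_pow_eq_pow_val, Units.val_one]
  field_simp
  ring

lemma affinePerm_image_pair [DecidableEq F] {a : Fˣ} {x y u v : F} (h : a * (y - x) = v - u) :
    ({x, y} : Finset F).image (affinePerm a (u - a * x)) = {u, v} := by
  rw [Finset.image_insert, Finset.image_singleton, affinePerm_apply, affinePerm_apply]
  congr 2
  · ring
  · linear_combination h

end AffinePerm

section SquareAffineGroup

variable (F : Type*) [Field F]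

def squareAffineGroup : Subgroup (Perm F) where
  carrier := {π | ∃ a ∈ (powMonoidHom 2 : Fˣ →* Fˣ).range, ∃ b, affinePerm a b = π}
  one_mem' := ⟨1, one_mem _, 0, affinePerm_one_zero⟩
  mul_mem' := by
    rintro _ _ ⟨a, ha, b, rfl⟩ ⟨c, hc, d, rfl⟩
    exact ⟨a * c, mul_mem ha hc, _, (affinePerm_mul a c b d).symm⟩
  inv_mem' := by
    rintro _ ⟨a, ha, b, rfl⟩
    exact ⟨a⁻¹, inv_mem ha, _, (affinePerm_inv a b).symm⟩

variable {F}

lemma affinePerm_mem_squareAffineGroup {a : Fˣ} (ha : IsSquare (a : F)) (b : F) :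
    affinePerm a b ∈ squareAffineGroup F := by
  obtain ⟨c, hc⟩ := ha
  have hc0 : c ≠ 0 := by rintro rfl; simp at hc
  exact ⟨a, ⟨Units.mk0 c hc0, Units.ext (by simp [hc, sq])⟩, b, rfl⟩

lemma card_squareAffineGroup [Fintype F] (hF : ringChar F ≠ 2) :
    Nat.card (squareAffineGroup F) = Fintype.card F * (Fintype.card F - 1) / 2 := by
  let param : (powMonoidHom 2 : Fˣ →* Fˣ).range × F → squareAffineGroup F :=
    fun p => ⟨affinePerm p.1 p.2, p.1, p.1.2, p.2, rfl⟩
  have hparam : Function.Bijective param := by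
    refine ⟨fun p p' h => ?_, fun ⟨_, a, ha, b, hab⟩ => ⟨(⟨a, ha⟩, b), Subtype.ext hab⟩⟩
    have := affinePerm_injective (a₁ := (p.1.1, p.2)) (a₂ := (p'.1.1, p'.2)) congr(($h : Perm F))
    exact Prod.ext (Subtype.ext congr($this.1)) congr($this.2)
  have hodd := FiniteField.odd_card_of_char_ne_two hF
  rw [← Nat.card_congr (Equiv.ofBijective param hparam), Nat.card_prod,
    IsCyclic.card_powMonoidHom_range, Nat.card_units, Nat.card_eq_fintype_card,
    Nat.gcd_eq_right (by omega), Nat.div_mul_right_comm (by omega), mul_comm]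

lemma squareAffineGroup_le_alternatingGroup [Fintype F] [DecidableEq F] (hF : ringChar F ≠ 2) :
    squareAffineGroup F ≤ alternatingGroup F := by
  rintro _ ⟨_, ⟨c, rfl⟩, b, rfl⟩
  rw [mem_alternatingGroup, powMonoidHom_apply,
    affinePerm_eq_mul_self_mul_mul_self (Ring.two_ne_zero hF), map_mul, map_mul, map_mul,
    Int.units_mul_self, Int.units_mul_self, one_mul]

end SquareAffineGroup

def IsPairTransitive {α : Type*} [DecidableEq α] (G : Subgroup (Perm α)) : Prop :=
  ∀ s t : Finset α, s.card = 2 → t.card = 2 → ∃ σ ∈ G, s.image σ = t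

section PairTransitive

variable {F : Type*} [Field F] [DecidableEq F]

lemma exists_mem_squareAffineGroup_image_pair {x y u v : F} (hxy : x ≠ y) (huv : u ≠ v)
    (hsq : IsSquare ((v - u) / (y - x))) :
    ∃ π ∈ squareAffineGroup F, ({x, y} : Finset F).image π = {u, v} := by
  have hyx : y - x ≠ 0 := sub_ne_zero.mpr hxy.symm
  let a := Units.mk0 ((v - u) / (y - x)) (div_ne_zero (sub_ne_zero.mpr huv.symm) hyx)
  exact ⟨_, affinePerm_mem_squareAffineGroup (a := a) hsq (u - a * x),
    affinePerm_image_pair (div_mul_cancel₀ _ hyx)⟩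

lemma isPairTransitive_squareAffineGroup [Fintype F] (hF : Fintype.card F % 4 = 3) :
    IsPairTransitive (squareAffineGroup F) := by
  intro s t hs ht
  obtain ⟨x, y, hxy, rfl⟩ := Finset.card_eq_two.mp hs
  obtain ⟨u, v, huv, rfl⟩ := Finset.card_eq_two.mp ht
  have hm1 : ¬IsSquare (-1 : F) := fun h => FiniteField.isSquare_neg_one_iff.mp h hF
  rcases isSquare_or_isSquare_neg_of_not_isSquare_neg_one hm1 ((v - u) / (y - x)) with hsq | hsq
  · exact exists_mem_squareAffineGroup_image_pair hxy huv hsq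
  · rw [← neg_div, neg_sub] at hsq
    rw [Finset.pair_comm u v]
    exact exists_mem_squareAffineGroup_image_pair hxy huv.symm hsq

end PairTransitive

section PermCongr

variable {α β : Type*} [DecidableEq α] [DecidableEq β]

lemma IsPairTransitive.map_permCongrHom {G : Subgroup (Perm α)} (hG : IsPairTransitive G)
    (e : α ≃ β) : IsPairTransitive (G.map (e.permCongrHom : Perm α →* Perm β)) := by
  intro s t hs ht
  have hcard {u : Finset β} (hu : u.card = 2) : (u.image e.symm).card = 2 := by
    rwa [Finset.card_image_of_injective _ e.symm.injective]
  obtain ⟨σ, hσ, hst⟩ := hG _ _ (hcard hs) (hcard ht)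
  refine ⟨e.permCongr σ, ⟨σ, hσ, rfl⟩, ?_⟩
  have hσ' : ⇑(e.permCongr σ) = e ∘ σ ∘ e.symm := rfl
  rw [hσ', ← Finset.image_image, ← Finset.image_image, hst, Finset.image_image,
    e.self_comp_symm, Finset.image_id]

lemma map_permCongrHom_le_alternatingGroup [Fintype α] [Fintype β] {G : Subgroup (Perm α)}
    (hG : G ≤ alternatingGroup α) (e : α ≃ β) :
    G.map (e.permCongrHom : Perm α →* Perm β) ≤ alternatingGroup β := by
  rintro _ ⟨σ, hσ, rfl⟩
  rw [mem_alternatingGroup, MonoidHom.coe_coe, permCongrHom_coe, sign_permCongr]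
  exact hG hσ

end PermCongr

theorem alternating_socle_not_minimal_transitive_general
    {q : ℕ} (hq : q.Prime) (hq4 : q % 4 = 3) :
    ∃ H : Subgroup (alternatingGroup (Fin q)),
      Nat.card H = q * (q - 1) / 2 ∧
      ∀ s t : Finset (Fin q), s.card = 2 → t.card = 2 →
        ∃ σ ∈ H, Finset.image (⇑(σ : Equiv.Perm (Fin q))) s = t := by
  have := Fact.mk hq
  have hcard : Fintype.card (ZMod q) = q := ZMod.card q
  have hchar : ringChar (ZMod q) ≠ 2 := by rw [ZMod.ringChar_zmod_n]; omega
  let e : ZMod q ≃ Fin q := Fintype.equivFinOfCardEq hcard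
  set K := (squareAffineGroup (ZMod q)).map (e.permCongrHom : Perm (ZMod q) →* Perm (Fin q))
  have hKA : K ≤ alternatingGroup (Fin q) :=
    map_permCongrHom_le_alternatingGroup (squareAffineGroup_le_alternatingGroup hchar) e
  refine ⟨K.subgroupOf (alternatingGroup (Fin q)), ?_, fun s t hs ht => ?_⟩
  · rw [Nat.card_congr (Subgroup.subgroupOfEquivOfLe hKA).toEquiv,
      Subgroup.card_map_of_injective e.permCongrHom.injective, card_squareAffineGroup hchar, hcard]
  · obtain ⟨σ, hσ, hst⟩ :=
      (isPairTransitive_squareAffineGroup (by rwa [hcard])).map_permCongrHom e s t hs ht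
    exact ⟨⟨σ, hKA hσ⟩, Subgroup.mem_subgroupOf.mpr hσ, hst⟩

theorem alternating_socle_not_minimal_transitive
    {q : ℕ} (hq : q.Prime) (hq4 : q % 4 = 3) (hq7 : 7 ≤ q) :
    ∃ H : Subgroup (alternatingGroup (Fin q)),
      Nat.card H = q * (q - 1) / 2 ∧
      ∀ s t : Finset (Fin q), s.card = 2 → t.card = 2 →
        ∃ σ ∈ H, Finset.image (⇑(σ : Equiv.Perm (Fin q))) s = t :=
  alternating_socle_not_minimal_transitive_general hq hq4
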